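/- For every ε > 0 there exist a constant c > 0 and a threshold T_0 with the following property: for every integer T ≥ T_0, every T-periodic binary sequence S satisfying C_k(S,N) ≤ (14/3)^k · k · √T · log T for all positive integers N ≤ T and all orders k with 1 ≤ k ≤ ε·log T/8, and every positive integer N with 2·T^{1/2+ε}·(log T)^2 < N ≤ T, the N-th linear complexity satisfies L(S,N) ≥ c·(log N)^2. All logarithms are in base 2. -/

import Mathlib

open Finset

/-- The first `N` terms of the binary sequence `s` satisfy a linear recurrence of order `L`
over `F₂`: `s (i+L) = c_{L-1} s (i+L-1) + … + c_0 s i` for `0 ≤ i < N - L`. -/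
def IsLinRecOn (s : ℕ → ZMod 2) (N L : ℕ) : Prop :=
  ∃ c : Fin L → ZMod 2, ∀ i, i + L < N → s (i + L) = ∑ j : Fin L, c j * s (i + j)

/-- The `N`th linear complexity of a binary sequence `s`: the smallest positive `L` such that
the first `N` terms satisfy a linear recurrence of order `L`, with the convention that it is `0`
when the first `N` terms all vanish. -/
noncomputable def linComplexity (s : ℕ → ZMod 2) (N : ℕ) : ℕ :=
  if ∀ i < N, s i = 0 then 0 else sInf {L | 0 < L ∧ IsLinRecOn s N L}

/-- The `N`th (aperiodic) correlation measure of order `k` of a binary sequence `s`: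
`max_{U,D} |∑_{n=0}^{U-1} (-1)^{s_{n+d₁}+…+s_{n+d_k}}|` over `U ≤ N - k + 1` and
`0 ≤ d₁ < … < d_k ≤ N - U`. -/
noncomputable def corr (s : ℕ → ZMod 2) (N k : ℕ) : ℕ :=
  sSup {m : ℕ | ∃ (U : ℕ) (d : Fin k → ℕ), U + k ≤ N + 1 ∧ StrictMono d ∧
    (∀ j, d j + U ≤ N) ∧
    m = (∑ n ∈ range U, (-1 : ℤ) ^ (∑ j : Fin k, (s (n + d j)).val)).natAbs}

/-- The periodic correlation measure of order `k` of a `T`-periodic binary sequence `s`: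
`max_D |∑_{n=0}^{T-1} (-1)^{s_{n+d₁}+…+s_{n+d_k}}|` over `0 ≤ d₁ < … < d_k < T`. -/
noncomputable def pcorr (s : ℕ → ZMod 2) (T k : ℕ) : ℕ :=
  sSup {m : ℕ | ∃ d : Fin k → ℕ, StrictMono d ∧ (∀ j, d j < T) ∧
    m = (∑ n ∈ range T, (-1 : ℤ) ^ (∑ j : Fin k, (s (n + d j)).val)).natAbs}

/-- The first `N` terms of `s` are generated by a (not necessarily linear) recurrence of
order `M`. -/
def IsMaxRecOn (s : ℕ → ZMod 2) (N M : ℕ) : Prop :=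
  ∃ f : (Fin M → ZMod 2) → ZMod 2, ∀ i, i + M < N → s (i + M) = f (fun j => s (i + j))

/-- The `N`th maximum-order complexity of a binary sequence `s`. -/
noncomputable def maxOrderComplexity (s : ℕ → ZMod 2) (N : ℕ) : ℕ :=
  sInf {M | 0 < M ∧ IsMaxRecOn s N M}

/-!
If the first `N` terms of `s` satisfy a linear recurrence of order `L`, cut `[0, tB)` into `t`
blocks of length `B` with `B ^ t > 2 ^ L`. Choosing one index per block gives `B ^ t` sets whose
windows `(s (i + m))_{m < L}` sum to one of only `2 ^ L` vectors, so two choices collide and their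
symmetric difference `E`, of size at most `2t`, has vanishing window sums. The recurrence
propagates `∑ i ∈ E, s (n + i) = 0` to every shift `n ≤ N - tB`, so the correlation measure of
order `#E` is at least `N + 1 - tB`. For `L < ε (log N)² / 256` and `t ≈ ε log T / 16` one gets
`B ≤ 2 T^{1/8}`, and this lower bound contradicts the assumed upper bound once
`N > 2 T^{1/2+ε} (log T)²`.
-/

theorem sum_symmDiff_eq_add_of_zmod_two {ι M : Type*} [DecidableEq ι] [AddCommGroup M]
    [Module (ZMod 2) M] (A B : Finset ι) (f : ι → M) :
    ∑ i ∈ symmDiff A B, f i = ∑ i ∈ A, f i + ∑ i ∈ B, f i := by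
  rw [← sum_union_inter, symmDiff_eq_sup_sdiff_inf, sup_eq_union, inf_eq_inter,
    ← sum_sdiff (inter_subset_union : A ∩ B ⊆ A ∪ B), add_assoc, ZModModule.add_self, add_zero]

theorem exists_sum_eq_zero_of_card_lt_pow {M : Type*} [AddCommGroup M] [Module (ZMod 2) M]
    [Fintype M] (f : ℕ → M) {t B : ℕ} (h : Fintype.card M < B ^ t) :
    ∃ E : Finset ℕ, E.Nonempty ∧ #E ≤ 2 * t ∧ (∀ i ∈ E, i < t * B) ∧ ∑ i ∈ E, f i = 0 := by
  classical
  let graph (b : Fin t → Fin B) : Finset (Fin t × Fin B) := univ.image fun j => (j, b j)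
  have graph_injective : Function.Injective graph := fun a a' h => funext fun j => by
    have hj : (j, a j) ∈ graph a' := h ▸ mem_image_of_mem (fun j => (j, a j)) (mem_univ j)
    obtain ⟨j', -, hj'⟩ := mem_image.mp hj
    obtain ⟨rfl, h⟩ := Prod.ext_iff.mp hj'
    exact h.symm
  have card_graph (b : Fin t → Fin B) : #(graph b) ≤ t := card_image_le.trans (by simp)
  -- `index (j, r) = j * B + r`, the `r`-th point of the `j`-th block
  let index : Fin t × Fin B ↪ ℕ :=
    ⟨fun p => finProdFinEquiv p, Fin.val_injective.comp finProdFinEquiv.injective⟩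
  obtain ⟨a, a', hne, hsum⟩ := Fintype.exists_ne_map_eq_of_card_lt
    (fun b => ∑ p ∈ graph b, f (index p)) (by simpa using h)
  refine ⟨(symmDiff (graph a) (graph a')).map index, ?_, ?_, ?_, ?_⟩
  · exact map_nonempty.mpr (symmDiff_nonempty.mpr (graph_injective.ne hne))
  · rw [card_map, two_mul]
    exact (card_le_card symmDiff_le_sup).trans
      ((card_union_le _ _).trans (add_le_add (card_graph a) (card_graph a')))
  · simp only [mem_map, forall_exists_index, and_imp]
    rintro _ p - rfl
    exact (finProdFinEquiv p).isLt
  · rw [sum_map, sum_symmDiff_eq_add_of_zmod_two]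
    exact hsum ▸ ZModModule.add_self _

theorem IsLinRecOn.sum_shift_eq_zero {s : ℕ → ZMod 2} {N L U : ℕ} (h : IsLinRecOn s N L)
    {E : Finset ℕ} (hE : ∀ i ∈ E, i + U ≤ N) (hbase : ∀ m < L, ∑ i ∈ E, s (m + i) = 0) :
    ∀ n < U, ∑ i ∈ E, s (n + i) = 0 := by
  obtain ⟨c, hc⟩ := h
  intro n
  induction n using Nat.strong_induction_on with
  | _ n ih =>
    intro hn
    rcases lt_or_ge n L with hnL | hnL
    · exact hbase n hnL
    obtain ⟨m, rfl⟩ := Nat.exists_eq_add_of_le' hnL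
    calc ∑ i ∈ E, s (m + L + i)
        = ∑ i ∈ E, ∑ j : Fin L, c j * s (m + j + i) := sum_congr rfl fun i hi => by
          rw [add_right_comm, hc _ (by have := hE i hi; omega)]
          simp only [add_right_comm]
      _ = ∑ j : Fin L, c j * ∑ i ∈ E, s (m + j + i) := by rw [sum_comm]; simp only [mul_sum]
      _ = 0 := sum_eq_zero fun j _ => by rw [ih _ (by omega) (by omega), mul_zero]

theorem isLinRecOn_linComplexity (s : ℕ → ZMod 2) (N : ℕ) :
    IsLinRecOn s N (linComplexity s N) := by
  unfold linComplexity
  split_ifs with hzero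
  · exact ⟨Fin.elim0, fun i hi => by simpa using hzero i hi⟩
  · obtain ⟨i, hi, -⟩ := not_forall₂.mp hzero
    have hN : N ∈ {L | 0 < L ∧ IsLinRecOn s N L} := ⟨by omega, 0, fun i hi => by omega⟩
    exact (Nat.sInf_mem ⟨N, hN⟩).2

theorem neg_one_pow_sum_val_eq_one {ι : Type*} {A : Finset ι} {f : ι → ZMod 2}
    (h : ∑ i ∈ A, f i = 0) : (-1 : ℤ) ^ (∑ i ∈ A, (f i).val) = 1 :=
  Even.neg_one_pow <| ZMod.natCast_eq_zero_iff_even.mp <| by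
    push_cast [ZMod.natCast_val, ZMod.cast_id']
    exact h

theorem le_corr {s : ℕ → ZMod 2} {N k U : ℕ} {d : Fin k → ℕ} (hd : StrictMono d)
    (hUk : U + k ≤ N + 1) (hdU : ∀ j, d j + U ≤ N) (h : ∀ n < U, ∑ j, s (n + d j) = 0) :
    U ≤ corr s N k := by
  refine le_csSup ⟨N + 1, ?_⟩ ⟨U, d, hUk, hd, hdU, ?_⟩
  · rintro _ ⟨U', d', hU', -, -, rfl⟩
    refine (Int.natAbs_sum_le _ _).trans ?_
    simp only [Int.natAbs_pow, Int.natAbs_neg, Int.natAbs_one, one_pow, sum_const, card_range,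
      smul_eq_mul, mul_one]
    omega
  · rw [sum_congr rfl fun n hn => neg_one_pow_sum_val_eq_one (h n (mem_range.mp hn))]
    simp

theorem le_corr_card {s : ℕ → ZMod 2} {N U : ℕ} {E : Finset ℕ} (hne : E.Nonempty)
    (hE : ∀ i ∈ E, i + U ≤ N) (h : ∀ n < U, ∑ i ∈ E, s (n + i) = 0) :
    U ≤ corr s N #E := by
  have hEU : E ⊆ range (N + 1 - U) := fun i hi => mem_range.mpr (by have := hE i hi; omega)
  have hUN : U ≤ N := by obtain ⟨i, hi⟩ := hne; have := hE i hi; omega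
  have hsum (n : ℕ) : ∑ j, s (n + E.orderEmbOfFin rfl j) = ∑ i ∈ E, s (n + i) := by
    conv_rhs => rw [← E.map_orderEmbOfFin_univ rfl, sum_map]
    rfl
  refine le_corr (E.orderEmbOfFin rfl).strictMono ?_ (fun j => hE _ (E.orderEmbOfFin_mem rfl j))
    fun n hn => (hsum n).trans (h n hn)
  have := card_le_card hEU
  simp only [card_range] at this
  omega

theorem IsLinRecOn.exists_le_corr {s : ℕ → ZMod 2} {N L t B : ℕ} (h : IsLinRecOn s N L)
    (hcard : 2 ^ L < B ^ t) (htB : t * B ≤ N) :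
    ∃ k, 1 ≤ k ∧ k ≤ 2 * t ∧ N + 1 - t * B ≤ corr s N k := by
  obtain ⟨E, hne, hEt, hEB, hsum⟩ :=
    exists_sum_eq_zero_of_card_lt_pow (fun i (m : Fin L) => s (i + m)) (by simpa using hcard)
  have hbase (m : ℕ) (hm : m < L) : ∑ i ∈ E, s (m + i) = 0 := by
    simpa [add_comm] using congrFun hsum ⟨m, hm⟩
  have hE : ∀ i ∈ E, i + (N + 1 - t * B) ≤ N := fun i hi => by have := hEB i hi; omega
  exact ⟨#E, hne.card_pos, hEt, le_corr_card hne hE (h.sum_shift_eq_zero hE hbase)⟩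

open Real

theorem two_rpow_le_rpow_of_le_mul_logb {T x y : ℝ} (hT : 0 < T) (h : x ≤ y * logb 2 T) :
    (2 : ℝ) ^ x ≤ T ^ y :=
  calc (2 : ℝ) ^ x ≤ 2 ^ (logb 2 T * y) := rpow_le_rpow_of_exponent_le one_le_two (by linarith)
    _ = T ^ y := by rw [rpow_mul zero_le_two, rpow_logb two_pos (by norm_num) hT]

theorem two_pow_lt_two_pow_div_add_one_pow (L : ℕ) {t : ℕ} (ht : 0 < t) :
    2 ^ L < (2 ^ (L / t + 1)) ^ t := by
  rw [← pow_mul]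
  exact Nat.pow_lt_pow_right one_lt_two (by rw [add_mul, one_mul]; exact Nat.lt_div_mul_add ht)

theorem fourteen_thirds_pow_mul_sqrt_mul_logb_le {T ε : ℝ} {k : ℕ} (hT : 1 ≤ T) (hε : ε ≤ 1 / 2)
    (hk : (k : ℝ) ≤ ε * logb 2 T / 8) :
    (14 / 3 : ℝ) ^ k * k * √T * logb 2 T ≤ logb 2 T ^ 2 * T ^ ((1 : ℝ) / 2 + 3 * ε / 8) / 16 := by
  have hR : 0 ≤ logb 2 T := logb_nonneg one_lt_two hT
  have hkR : (k : ℝ) ≤ logb 2 T / 16 := by nlinarith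
  have hpow : (14 / 3 : ℝ) ^ k ≤ T ^ (3 * ε / 8) :=
    calc (14 / 3 : ℝ) ^ k ≤ (2 ^ 3) ^ k := by gcongr; norm_num
      _ = 2 ^ ((3 * k : ℕ) : ℝ) := by rw [rpow_natCast, pow_mul]
      _ ≤ T ^ (3 * ε / 8) :=
        two_rpow_le_rpow_of_le_mul_logb (by linarith) (by push_cast; linarith)
  calc (14 / 3 : ℝ) ^ k * k * √T * logb 2 T
      ≤ T ^ (3 * ε / 8) * (logb 2 T / 16) * T ^ ((1 : ℝ) / 2) * logb 2 T := by
        rw [sqrt_eq_rpow]; gcongr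
    _ = logb 2 T ^ 2 * T ^ ((1 : ℝ) / 2 + 3 * ε / 8) / 16 := by
        rw [rpow_add (by linarith)]; ring

theorem cast_mul_two_pow_div_add_one_le {T ε : ℝ} {L t : ℕ} (hT : 0 < T) (hε : ε ≤ 1 / 2)
    (hR : 1 ≤ logb 2 T) (ht0 : 0 < t) (ht_ge : ε * logb 2 T / 32 ≤ t)
    (ht_le : (t : ℝ) ≤ ε * logb 2 T / 16) (hL : (L : ℝ) ≤ ε / 256 * logb 2 T ^ 2) :
    ((t * 2 ^ (L / t + 1) : ℕ) : ℝ) ≤ logb 2 T ^ 2 * T ^ ((1 : ℝ) / 8) / 16 := by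
  set R := logb 2 T
  have hLt : ((L / t : ℕ) : ℝ) ≤ 1 / 8 * R := by
    refine Nat.cast_div_le.trans ((div_le_iff₀ (Nat.cast_pos.mpr ht0)).mpr ?_)
    nlinarith
  have hB : (2 : ℝ) ^ (L / t + 1) ≤ 2 * T ^ ((1 : ℝ) / 8) :=
    calc (2 : ℝ) ^ (L / t + 1) = 2 * 2 ^ ((L / t : ℕ) : ℝ) := by rw [rpow_natCast, pow_succ']
      _ ≤ 2 * T ^ ((1 : ℝ) / 8) := by gcongr; exact two_rpow_le_rpow_of_le_mul_logb hT hLt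
  push_cast
  calc (t : ℝ) * 2 ^ (L / t + 1)
      ≤ ε * R / 16 * (2 * T ^ ((1 : ℝ) / 8)) := by
        gcongr; exact (Nat.cast_nonneg t).trans ht_le
    _ = 2 * ε * R * T ^ ((1 : ℝ) / 8) / 16 := by ring
    _ ≤ 1 * R ^ 2 * T ^ ((1 : ℝ) / 8) / 16 := by
      gcongr
      · linarith
      · exact le_self_pow₀ hR two_ne_zero
    _ = R ^ 2 * T ^ ((1 : ℝ) / 8) / 16 := by ring

theorem le_linComplexity_of_corr_le {ε : ℝ} (hε : 0 < ε) (hε2 : ε ≤ 1 / 2) {T N : ℕ}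
    (hT : (2 : ℝ) ^ (32 / ε) ≤ T) (s : ℕ → ZMod 2)
    (hcorr : ∀ k : ℕ, 1 ≤ k → (k : ℝ) ≤ ε * logb 2 T / 8 →
      (corr s N k : ℝ) ≤ (14 / 3 : ℝ) ^ k * k * √T * logb 2 T)
    (hN : 2 * (T : ℝ) ^ ((1 : ℝ) / 2 + ε) * logb 2 T ^ 2 < N) (hNT : N ≤ T) :
    ε / 256 * logb 2 N ^ 2 ≤ linComplexity s N := by
  set R := logb 2 (T : ℝ)
  set X := (T : ℝ) ^ ((1 : ℝ) / 2 + ε)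
  set L := linComplexity s N
  have hT1 : (1 : ℝ) ≤ T := (one_le_rpow one_le_two (by positivity)).trans hT
  have hεR : 32 ≤ ε * R := by
    have h := logb_le_logb_of_le one_lt_two (by positivity) hT
    rw [logb_rpow two_pos (by norm_num), div_le_iff₀ hε] at h
    linarith
  have hR : 64 ≤ R := by nlinarith
  have hX (e : ℝ) (he : e ≤ 1 / 2 + ε) : (T : ℝ) ^ e ≤ X := rpow_le_rpow_of_exponent_le hT1 he
  have hN0 : (0 : ℝ) < N := lt_of_le_of_lt (by positivity) hN
  by_contra! hL
  have hLR : (L : ℝ) ≤ ε / 256 * R ^ 2 := hL.le.trans <| by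
    gcongr
    · exact logb_nonneg one_lt_two (Nat.one_le_cast.mpr (Nat.cast_pos.mp hN0))
    · exact logb_le_logb_of_le one_lt_two hN0 (Nat.cast_le.mpr hNT)
  set t := ⌊ε * R / 16⌋₊
  have ht_ge : ε * R / 32 ≤ t := by linarith [Nat.sub_one_lt_floor (ε * R / 16)]
  have ht_le : (t : ℝ) ≤ ε * R / 16 := Nat.floor_le (by positivity)
  have ht0 : 0 < t := (Nat.cast_pos (α := ℝ)).mp (by linarith)
  set B := 2 ^ (L / t + 1)
  have htB : (t * B : ℕ) ≤ R ^ 2 * X / 16 :=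
    (cast_mul_two_pow_div_add_one_le (by positivity) hε2 (by linarith) ht0 ht_ge ht_le hLR).trans
      (by gcongr; exact hX _ (by linarith))
  have htBN : t * B ≤ N := by
    have : R ^ 2 * X / 16 ≤ N := by nlinarith [(by positivity : 0 < R ^ 2 * X)]
    exact_mod_cast htB.trans this
  obtain ⟨k, hk1, hkt, hk⟩ := (isLinRecOn_linComplexity s N).exists_le_corr (B := B)
    (two_pow_lt_two_pow_div_add_one_pow L ht0) htBN
  have hk_range : (k : ℝ) ≤ ε * R / 8 := by
    have : (k : ℝ) ≤ 2 * t := by exact_mod_cast hkt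
    linarith
  have hcorr_le : (corr s N k : ℝ) ≤ R ^ 2 * X / 16 :=
    (hcorr k hk1 hk_range).trans <|
      (fourteen_thirds_pow_mul_sqrt_mul_logb_le hT1 hε2 hk_range).trans <| by
        gcongr; exact hX _ (by linarith)
  have hN_le : (N : ℝ) ≤ corr s N k + (t * B : ℕ) := by
    exact_mod_cast (by omega : N ≤ corr s N k + t * B)
  nlinarith [(by positivity : 0 < R ^ 2 * X)]

/-- **Hall-type corollary, genericized.** For every `ε > 0` there are `c > 0` and `T₀` such
that every `T`-periodic binary sequence (`T ≥ T₀`) whose correlation measures satisfy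
`C_k(S,N) ≤ (14/3)^k k √T log T` for all `N ≤ T` and all `1 ≤ k ≤ ε log T / 8` has
`L(S,N) ≥ c (log N)²` for every `N` with `2 T^{1/2+ε} (log T)² < N ≤ T` (base-2 logs). -/
theorem hall_linComplexity (ε : ℝ) (hε : 0 < ε) :
    ∃ c : ℝ, 0 < c ∧ ∃ T₀ : ℕ, ∀ T : ℕ, T₀ ≤ T → ∀ s : ℕ → ZMod 2,
      (∀ i, s (i + T) = s i) →
      (∀ N : ℕ, 0 < N → N ≤ T → ∀ k : ℕ, 1 ≤ k → (k : ℝ) ≤ ε * Real.logb 2 T / 8 →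
        (corr s N k : ℝ) ≤ (14 / 3 : ℝ) ^ k * k * Real.sqrt T * Real.logb 2 T) →
      ∀ N : ℕ, 2 * (T : ℝ) ^ ((1 : ℝ) / 2 + ε) * (Real.logb 2 T) ^ 2 < (N : ℝ) → N ≤ T →
        c * (Real.logb 2 N) ^ 2 ≤ (linComplexity s N : ℝ) := by
  -- shrinking `ε` weakens both hypotheses, so the bound for `δ` applies
  set δ := min ε (1 / 2)
  have hδ : 0 < δ := lt_min hε one_half_pos
  refine ⟨δ / 256, by positivity, ⌈(2 : ℝ) ^ (32 / δ)⌉₊, fun T hT s _ hcorr N hN hNT => ?_⟩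
  replace hT : (2 : ℝ) ^ (32 / δ) ≤ T := Nat.ceil_le.mp hT
  have hT1 : (1 : ℝ) ≤ T := (one_le_rpow one_le_two (by positivity)).trans hT
  have hN0 : 0 < N := (Nat.cast_pos (α := ℝ)).mp (lt_of_le_of_lt (by positivity) hN)
  refine le_linComplexity_of_corr_le hδ (min_le_right _ _) hT s
    (fun k hk1 hk => hcorr N hN0 hNT k hk1 (hk.trans ?_)) (hN.trans_le' ?_) hNT
  · have := logb_nonneg one_lt_two hT1
    gcongr
    exact min_le_left _ _
  · gcongr
    exact min_le_left _ _
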